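/- arXiv:2303.12298 — 4 statements merged into one kernel-verified Lean document; each statement's English description precedes it below -/
import Mathlib

section
/- For any real symmetric n×n matrix A (with n ≥ 1), cosh(‖A‖) ≤ tr[cosh(A)], where ‖·‖ is the operator norm. -/
set_option maxHeartbeats 1000000

open Matrix

/-- Matrix function defined via eigendecomposition of a real symmetric matrix. -/
noncomputable def matFun {n : ℕ} (f : ℝ → ℝ) (A : Matrix (Fin n) (Fin n) ℝ)
    (hA : A.IsHermitian) : Matrix (Fin n) (Fin n) ℝ :=
  (hA.eigenvectorUnitary : Matrix (Fin n) (Fin n) ℝ) *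
    Matrix.diagonal (fun i => f (hA.eigenvalues i)) *
      star (hA.eigenvectorUnitary : Matrix (Fin n) (Fin n) ℝ)

noncomputable def opNorm {n : ℕ} (A : Matrix (Fin n) (Fin n) ℝ) : ℝ :=
  ‖Matrix.toEuclideanCLM (𝕜 := ℝ) A‖

theorem cosh_opNorm_le_trace {n : ℕ} (hn : 1 ≤ n) (A : Matrix (Fin n) (Fin n) ℝ)
    (hA : A.IsHermitian) :
    Real.cosh (opNorm A) ≤ (matFun Real.cosh A hA).trace := by
  classical
  have hi : Inhabited (Fin n) := ⟨⟨0, hn⟩⟩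
  obtain ⟨i0, -, hi0⟩ := Finset.exists_max_image Finset.univ
    (fun i => |hA.eigenvalues i|) ⟨⟨0, hn⟩, Finset.mem_univ _⟩
  set M := |hA.eigenvalues i0| with hM
  have hM0 : 0 ≤ M := abs_nonneg _
  -- trace computation
  have htr : (matFun Real.cosh A hA).trace = ∑ i, Real.cosh (hA.eigenvalues i) := by
    rw [matFun, Matrix.trace_mul_cycle]
    rw [Unitary.coe_star_mul_self, one_mul, Matrix.trace_diagonal]
  -- the operator is selfadjoint
  set T := Matrix.toEuclideanCLM (𝕜 := ℝ) A with hT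
  have hsym : (Matrix.toEuclideanLin A).IsSymmetric :=
    Matrix.isHermitian_iff_isSymmetric.mp hA
  set b := hA.eigenvectorBasis with hb
  have hTb : ∀ j, T (b j) = hA.eigenvalues j • b j := by
    intro j
    have h1 := hA.mulVec_eigenvectorBasis j
    apply (WithLp.equiv 2 _).injective
    simp only [WithLp.equiv_apply, Matrix.ofLp_toEuclideanCLM, WithLp.ofLp_smul]
    ext i
    exact congrFun h1 i
  have hrepr : ∀ (x : EuclideanSpace ℝ (Fin n)) j,
      b.repr (T x) j = hA.eigenvalues j * b.repr x j := by
    intro x j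
    rw [OrthonormalBasis.repr_apply_apply, OrthonormalBasis.repr_apply_apply]
    have h2 : inner ℝ (T (b j)) x = inner ℝ (b j) (T x) := hsym (b j) x
    rw [← h2, hTb j, real_inner_smul_left]
  -- norm bound
  have hnorm : opNorm A ≤ M := by
    rw [opNorm]
    apply ContinuousLinearMap.opNorm_le_bound _ hM0
    intro x
    have hx : ‖x‖ = ‖b.repr x‖ := (b.repr.norm_map x).symm
    have hTx : ‖T x‖ = ‖b.repr (T x)‖ := (b.repr.norm_map (T x)).symm
    have key : ‖b.repr (T x)‖ ^ 2 ≤ (M * ‖x‖) ^ 2 := by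
      rw [PiLp.norm_sq_eq_of_L2, hx, mul_pow, PiLp.norm_sq_eq_of_L2, Finset.mul_sum]
      apply Finset.sum_le_sum
      intro j _
      rw [hrepr x j]
      have hj : |hA.eigenvalues j| ≤ M := hi0 j (Finset.mem_univ j)
      have h1 : (0:ℝ) ≤ |b.repr x j| := abs_nonneg _
      simp only [Real.norm_eq_abs, abs_mul, mul_pow]
      exact mul_le_mul_of_nonneg_right
        (pow_le_pow_left₀ (abs_nonneg _) hj 2) (sq_nonneg _)
    calc ‖T x‖ = Real.sqrt (‖b.repr (T x)‖ ^ 2) := by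
          rw [Real.sqrt_sq (norm_nonneg _), hTx]
      _ ≤ Real.sqrt ((M * ‖x‖) ^ 2) := Real.sqrt_le_sqrt key
      _ = M * ‖x‖ := Real.sqrt_sq (by positivity)
  -- combine
  rw [htr]
  have h1 : Real.cosh (opNorm A) ≤ Real.cosh M := by
    rw [Real.cosh_le_cosh]
    have h0 : (0:ℝ) ≤ opNorm A := norm_nonneg _
    rwa [abs_of_nonneg h0, abs_of_nonneg hM0]
  have h2 : Real.cosh M = Real.cosh (hA.eigenvalues i0) := Real.cosh_abs _
  refine h1.trans (h2.le.trans ?_)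
  exact Finset.single_le_sum (fun j _ => (Real.cosh_pos _).le) (Finset.mem_univ i0)
end

section
/- For any real symmetric n×n matrix A (with n ≥ 1), ‖A‖ ≤ 1 + log(tr[cosh(A)]), where ‖·‖ is the operator norm. -/
open Matrix

open scoped Matrix.Norms.L2Operator in
lemma l2_opNorm_diagonal_le {n : ℕ} (d : Fin n → ℝ) (C : ℝ) (hC : 0 ≤ C)
    (h : ∀ i, |d i| ≤ C) : ‖(Matrix.diagonal d : Matrix (Fin n) (Fin n) ℝ)‖ ≤ C := by
  rw [Matrix.l2_opNorm_def]
  suffices H : ∀ (x y : EuclideanSpace ℝ (Fin n)), (∀ i, y i = d i * x i) → ‖y‖ ≤ C * ‖x‖ by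
    refine ContinuousLinearMap.opNorm_le_bound _ hC fun x => H x _ fun i => ?_
    simp [Matrix.toEuclideanLin, Matrix.mulVec_diagonal]
  intro x y hy
  rw [EuclideanSpace.norm_eq, EuclideanSpace.norm_eq,
    ← Real.sqrt_sq hC, ← Real.sqrt_mul (sq_nonneg C)]
  apply Real.sqrt_le_sqrt
  rw [Finset.mul_sum]
  refine Finset.sum_le_sum fun i _ => ?_
  rw [hy i]
  simp only [Real.norm_eq_abs, abs_mul, mul_pow]
  exact mul_le_mul_of_nonneg_right (pow_le_pow_left₀ (abs_nonneg _) (h i) 2) (by positivity)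

theorem opNorm_le_one_add_log_trace_cosh {n : ℕ} (hn : 1 ≤ n)
    (A : Matrix (Fin n) (Fin n) ℝ) (hA : A.IsHermitian) :
    opNorm A ≤ 1 + Real.log ((matFun Real.cosh A hA).trace) := by
  open scoped Matrix.Norms.L2Operator in
  have hne : (Finset.univ : Finset (Fin n)).Nonempty := by
    simpa [Finset.univ_nonempty_iff, ← Fin.pos_iff_nonempty] using (show 0 < n from hn)
  set lam := hA.eigenvalues with hlam
  have hstar : star (hA.eigenvectorUnitary : Matrix (Fin n) (Fin n) ℝ) *
      (hA.eigenvectorUnitary : Matrix (Fin n) (Fin n) ℝ) = 1 :=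
    (Unitary.mem_iff.mp hA.eigenvectorUnitary.2).1
  -- trace computation
  have htrace : (matFun Real.cosh A hA).trace = ∑ i, Real.cosh (lam i) := by
    rw [matFun, Matrix.trace_mul_cycle, hstar, one_mul, Matrix.trace_diagonal]
  have htpos : 0 < (matFun Real.cosh A hA).trace := by
    rw [htrace]
    exact Finset.sum_pos (fun i _ => Real.cosh_pos _) hne
  set t := (matFun Real.cosh A hA).trace with ht
  -- sup of |eigenvalues|
  set C := Finset.univ.sup' hne fun i => |lam i| with hC
  have hC0 : 0 ≤ C := by
    obtain ⟨i⟩ := hne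
    exact le_trans (abs_nonneg (lam i)) (Finset.le_sup' (fun i => |lam i|) (Finset.mem_univ i))
  -- operator norm bound
  have hnorm : opNorm A ≤ C := by
    rw [show opNorm A = ‖A‖ from (Matrix.cstar_norm_def A).symm]
    conv_lhs => rw [hA.spectral_theorem, Unitary.conjStarAlgAut_apply]
    rw [mul_assoc, CStarRing.norm_coe_unitary_mul hA.eigenvectorUnitary, ← Unitary.coe_star,
      CStarRing.norm_mul_coe_unitary]
    have h2 : Matrix.diagonal (RCLike.ofReal ∘ hA.eigenvalues) = Matrix.diagonal lam := rfl
    rw [h2]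
    exact l2_opNorm_diagonal_le _ _ hC0 fun i => Finset.le_sup' (fun i => |lam i|) (Finset.mem_univ i)
  -- exp C ≤ 2 * t
  obtain ⟨i0, _, hi0⟩ := Finset.exists_mem_eq_sup' hne fun i => |lam i|
  have hexp : Real.exp C ≤ 2 * t := by
    have h3 : Real.exp C ≤ 2 * Real.cosh C := by
      rw [Real.cosh_eq]
      have := (Real.exp_pos (-C)).le
      linarith
    have h4 : Real.cosh C = Real.cosh (lam i0) := by rw [hC, hi0, Real.cosh_abs]
    have h5 : Real.cosh (lam i0) ≤ t := by
      rw [htrace]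
      exact Finset.single_le_sum (fun i _ => (Real.cosh_pos _).le) (Finset.mem_univ i0)
    calc Real.exp C ≤ 2 * Real.cosh C := h3
      _ = 2 * Real.cosh (lam i0) := by rw [h4]
      _ ≤ 2 * t := by linarith
  have hClog : C ≤ Real.log (2 * t) :=
    (Real.le_log_iff_exp_le (by positivity)).mpr hexp
  have hfinal : Real.log (2 * t) ≤ 1 + Real.log t := by
    rw [Real.log_mul two_ne_zero (ne_of_gt htpos)]
    have : Real.log 2 ≤ 1 := le_trans Real.log_two_lt_d9.le (by norm_num)
    linarith
  exact le_trans hnorm (le_trans hClog hfinal)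
end

section
/- For any real symmetric n×n matrix A, (tr[sinh^2(A)])^{1/2} ≥ (1/√n)(tr[cosh(A)] − n). -/
/-!
Everything reduces to the eigenvalues `λᵢ` of `A`, since the traces are `∑ sinh² λᵢ` and
`∑ cosh λᵢ`. As `cosh x ≥ 1`, the identity `cosh² − sinh² = 1` gives
`sinh² x − (cosh x − 1)² = 2 (cosh x − 1) ≥ 0`, and Cauchy–Schwarz bounds the `ℓ¹` norm
`∑ (cosh λᵢ − 1)` by `√n` times the `ℓ²` norm of `(cosh λᵢ − 1)ᵢ`.
-/

open Matrix

section matFun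

variable {n : ℕ} (f g : ℝ → ℝ) {A : Matrix (Fin n) (Fin n) ℝ} (hA : A.IsHermitian)

lemma trace_matFun : (matFun f A hA).trace = ∑ i, f (hA.eigenvalues i) := by
  have hU := Unitary.star_mul_self_of_mem hA.eigenvectorUnitary.prop
  rw [matFun, trace_mul_cycle, hU, one_mul, trace_diagonal]

lemma matFun_mul_matFun : matFun f A hA * matFun g A hA = matFun (fun x => f x * g x) A hA := by
  have hU := Unitary.star_mul_self_of_mem hA.eigenvectorUnitary.prop
  simp only [matFun, Matrix.mul_assoc]
  rw [← Matrix.mul_assoc (star _), hU, Matrix.one_mul, ← Matrix.mul_assoc (diagonal _),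
    diagonal_mul_diagonal]

lemma matFun_sq : matFun f A hA ^ 2 = matFun (fun x => f x ^ 2) A hA := by
  simp only [sq, matFun_mul_matFun]

end matFun

lemma Real.cosh_sub_one_sq_le_sinh_sq (x : ℝ) : (cosh x - 1) ^ 2 ≤ sinh x ^ 2 := by
  nlinarith [cosh_sq x, one_le_cosh x]

lemma Finset.one_div_sqrt_card_mul_sum_le_sqrt_sum_sq {ι : Type*} (s : Finset ι)
    (f : ι → ℝ) :
    1 / √(s.card : ℝ) * ∑ i ∈ s, f i ≤ √(∑ i ∈ s, f i ^ 2) := by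
  rcases s.eq_empty_or_nonempty with rfl | hs
  · simp
  have hcard : 0 < √(s.card : ℝ) := Real.sqrt_pos.mpr (by exact_mod_cast hs.card_pos)
  rw [one_div_mul_eq_div, div_le_iff₀ hcard]
  simpa [sum_const, nsmul_eq_mul] using Real.sum_mul_le_sqrt_mul_sqrt s f 1

theorem sqrt_trace_sinh_sq_ge {n : ℕ} (A : Matrix (Fin n) (Fin n) ℝ) (hA : A.IsHermitian) :
    Real.sqrt ((matFun Real.sinh A hA ^ 2).trace) ≥
      (1 / Real.sqrt n) * ((matFun Real.cosh A hA).trace - n) := by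
  rw [matFun_sq, trace_matFun, trace_matFun]
  set μ := hA.eigenvalues
  calc 1 / √(n : ℝ) * (∑ i, Real.cosh (μ i) - n)
      = 1 / √(n : ℝ) * ∑ i, (Real.cosh (μ i) - 1) := by simp [Finset.sum_sub_distrib]
    _ ≤ √(∑ i, (Real.cosh (μ i) - 1) ^ 2) := by
        simpa using
          Finset.one_div_sqrt_card_mul_sum_le_sqrt_sum_sq .univ fun i => Real.cosh (μ i) - 1
    _ ≤ √(∑ i, Real.sinh (μ i) ^ 2) :=
        Real.sqrt_le_sqrt <| Finset.sum_le_sum fun i _ => Real.cosh_sub_one_sq_le_sinh_sq _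
end

section
/- Let u_1, ..., u_m ∈ ℝ^n be unit vectors with |⟨u_i, u_j⟩| ≤ ρ for i ≠ j and mρ^2 ≤ 0.1, A a symmetric n×n matrix, b ∈ ℝ^m, λ > 0. Define G = λ ∑_{i=1}^m sinh(λ(u_i^⊤ A u_i − b_i)) u_i u_i^⊤. Then (1/λ^2)‖G‖_F^2 ≥ (0.9/m)(∑_{i=1}^m cosh(λ(u_i^⊤ A u_i − b_i)) − m)^2. -/
open Matrix Finset

theorem gradient_norm_lower_bound_general {m n : ℕ} (u : Fin m → Fin n → ℝ)
    (hunit : ∀ i, u i ⬝ᵥ u i = 1) (ρ : ℝ)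
    (hρ : ∀ i j, i ≠ j → |u i ⬝ᵥ u j| ≤ ρ) (hmρ : m * ρ ^ 2 ≤ 0.1)
    (A : Matrix (Fin n) (Fin n) ℝ) (hA : A.IsSymm) (b : Fin m → ℝ)
    (lam : ℝ) (hlam : 0 < lam)
    (G : Matrix (Fin n) (Fin n) ℝ)
    (hG : G = lam • ∑ i, Real.sinh (lam * (u i ⬝ᵥ A.mulVec (u i) - b i)) •
      vecMulVec (u i) (u i)) :
    (1 / lam ^ 2) * (∑ a, ∑ c, G a c ^ 2) ≥
      (0.9 / m) * ((∑ i, Real.cosh (lam * (u i ⬝ᵥ A.mulVec (u i) - b i))) - m) ^ 2 := by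
  set S : Fin m → ℝ := fun i => Real.sinh (lam * (u i ⬝ᵥ A.mulVec (u i) - b i)) with hS
  set C : Fin m → ℝ := fun i => Real.cosh (lam * (u i ⬝ᵥ A.mulVec (u i) - b i)) with hC
  have hGac : ∀ a c', G a c' = lam * ∑ i, S i * (u i a * u i c') := by
    intro a c'
    rw [hG]
    simp [Matrix.sum_apply, vecMulVec_apply]
    exact Or.inl rfl
  have key : ∑ a, ∑ c', G a c' ^ 2
      = lam ^ 2 * ∑ i, ∑ j, (S i * S j) * (u i ⬝ᵥ u j) ^ 2 := by
    simp only [hGac, mul_pow, ← Finset.mul_sum]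
    congr 1
    calc ∑ a, ∑ c', (∑ i, S i * (u i a * u i c')) ^ 2
        = ∑ a, ∑ c', ∑ i, ∑ j, (S i * S j) * ((u i a * u j a) * (u i c' * u j c')) := by
          refine Finset.sum_congr rfl fun a _ => Finset.sum_congr rfl fun c' _ => ?_
          rw [sq, Finset.sum_mul_sum]
          exact Finset.sum_congr rfl fun i _ => Finset.sum_congr rfl fun j _ => by ring
      _ = ∑ a, ∑ i, ∑ j, ∑ c', (S i * S j) * ((u i a * u j a) * (u i c' * u j c')) := by
          refine Finset.sum_congr rfl fun a _ => ?_
          rw [show (∑ c' : Fin n, ∑ i : Fin m, ∑ j : Fin m, (S i * S j) * ((u i a * u j a) * (u i c' * u j c'))) = ∑ i : Fin m, ∑ c' : Fin n, ∑ j : Fin m, (S i * S j) * ((u i a * u j a) * (u i c' * u j c')) from Finset.sum_comm]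
          exact Finset.sum_congr rfl fun i _ => Finset.sum_comm
      _ = ∑ i, ∑ a, ∑ j, ∑ c', (S i * S j) * ((u i a * u j a) * (u i c' * u j c')) :=
          Finset.sum_comm
      _ = ∑ i, ∑ j, ∑ a, ∑ c', (S i * S j) * ((u i a * u j a) * (u i c' * u j c')) :=
          Finset.sum_congr rfl fun i _ => Finset.sum_comm
      _ = ∑ i, ∑ j, (S i * S j) * (u i ⬝ᵥ u j) ^ 2 := by
          refine Finset.sum_congr rfl fun i _ => Finset.sum_congr rfl fun j _ => ?_
          simp only [dotProduct, sq]
          rw [Finset.sum_mul_sum, Finset.mul_sum]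
          refine Finset.sum_congr rfl fun a _ => ?_
          rw [Finset.mul_sum]
  -- scalar facts
  have hS2 : ∀ i, S i ^ 2 = C i ^ 2 - 1 := fun i => Real.sinh_sq _
  have hC1 : ∀ i, 1 ≤ C i := fun i => Real.one_le_cosh _
  -- double sum lower bound
  have habs : ∀ i j, i ≠ j → (S i * S j) * (u i ⬝ᵥ u j) ^ 2 ≥ -(|S i| * |S j| * ρ ^ 2) := by
    intro i j hij
    have h1 : |(S i * S j) * (u i ⬝ᵥ u j) ^ 2| ≤ |S i| * |S j| * ρ ^ 2 := by
      rw [abs_mul, abs_mul]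
      have h2 : |(u i ⬝ᵥ u j) ^ 2| ≤ ρ ^ 2 := by
        rw [abs_pow]
        exact pow_le_pow_left₀ (abs_nonneg _) (hρ i j hij) 2
      exact mul_le_mul_of_nonneg_left h2 (by positivity) |>.trans_eq (by ring)
    linarith [neg_abs_le ((S i * S j) * (u i ⬝ᵥ u j) ^ 2)]
  have hsplit : ∑ i, ∑ j, (S i * S j) * (u i ⬝ᵥ u j) ^ 2
      ≥ ∑ i, S i ^ 2 - ρ ^ 2 * (∑ i, |S i|) ^ 2 := by
    have : ∀ i : Fin m, ∑ j, (S i * S j) * (u i ⬝ᵥ u j) ^ 2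
        ≥ S i ^ 2 - ∑ j ∈ univ.erase i, |S i| * |S j| * ρ ^ 2 := by
      intro i
      rw [← Finset.add_sum_erase _ _ (mem_univ i), hunit i]
      have : ∑ j ∈ univ.erase i, (S i * S j) * (u i ⬝ᵥ u j) ^ 2
          ≥ ∑ j ∈ univ.erase i, -(|S i| * |S j| * ρ ^ 2) :=
        Finset.sum_le_sum fun j hj => habs i j (Finset.ne_of_mem_erase hj).symm
      rw [Finset.sum_neg_distrib] at this
      nlinarith [this]
    calc ∑ i, ∑ j, (S i * S j) * (u i ⬝ᵥ u j) ^ 2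
        ≥ ∑ i, (S i ^ 2 - ∑ j ∈ univ.erase i, |S i| * |S j| * ρ ^ 2) :=
          Finset.sum_le_sum fun i _ => this i
      _ ≥ ∑ i, S i ^ 2 - ρ ^ 2 * (∑ i, |S i|) ^ 2 := by
          rw [Finset.sum_sub_distrib]
          have h3 : ∑ i, ∑ j ∈ univ.erase i, |S i| * |S j| * ρ ^ 2
              ≤ ρ ^ 2 * (∑ i, |S i|) ^ 2 := by
            have h4 : ∀ i : Fin m, ∑ j ∈ univ.erase i, |S i| * |S j| * ρ ^ 2
                ≤ ∑ j, |S i| * |S j| * ρ ^ 2 :=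
              fun i => Finset.sum_le_sum_of_subset_of_nonneg (Finset.subset_univ _)
                (fun j _ _ => by positivity)
            calc ∑ i, ∑ j ∈ univ.erase i, |S i| * |S j| * ρ ^ 2
                ≤ ∑ i, ∑ j, |S i| * |S j| * ρ ^ 2 := Finset.sum_le_sum fun i _ => h4 i
              _ = ρ ^ 2 * (∑ i, |S i|) ^ 2 := by
                  rw [sq (∑ i, |S i|), Finset.sum_mul_sum, Finset.mul_sum]
                  refine Finset.sum_congr rfl fun i _ => ?_
                  rw [Finset.mul_sum]
                  exact Finset.sum_congr rfl fun j _ => by ring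
          linarith
  have hCS : (∑ i, |S i|) ^ 2 ≤ m * ∑ i, S i ^ 2 := by
    have := sq_sum_le_card_mul_sum_sq (s := (univ : Finset (Fin m))) (f := fun i => |S i|)
    simpa [sq_abs] using this
  have hSnn : (0:ℝ) ≤ ∑ i, S i ^ 2 := Finset.sum_nonneg fun i _ => sq_nonneg _
  have hoff : ρ ^ 2 * (∑ i, |S i|) ^ 2 ≤ 0.1 * ∑ i, S i ^ 2 := by
    calc ρ ^ 2 * (∑ i, |S i|) ^ 2 ≤ ρ ^ 2 * (m * ∑ i, S i ^ 2) :=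
          mul_le_mul_of_nonneg_left hCS (sq_nonneg _)
      _ = (m * ρ ^ 2) * ∑ i, S i ^ 2 := by ring
      _ ≤ 0.1 * ∑ i, S i ^ 2 := mul_le_mul_of_nonneg_right hmρ hSnn
  have hmain : ∑ i, ∑ j, (S i * S j) * (u i ⬝ᵥ u j) ^ 2 ≥ 0.9 * ∑ i, S i ^ 2 := by
    linarith
  -- cosh side
  have hcosh : ((∑ i, C i) - (m:ℝ)) ^ 2 ≤ (m:ℝ) * ∑ i, S i ^ 2 := by
    have h1 : (∑ i, C i) - (m:ℝ) = ∑ i, (C i - 1) := by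
      rw [Finset.sum_sub_distrib]
      simp
    have h2 : (∑ i, (C i - 1)) ^ 2 ≤ (m:ℝ) * ∑ i, (C i - 1) ^ 2 := by
      have := sq_sum_le_card_mul_sum_sq (s := (univ : Finset (Fin m))) (f := fun i => C i - 1)
      simpa using this
    have h3 : ∑ i, (C i - 1) ^ 2 ≤ ∑ i, S i ^ 2 :=
      Finset.sum_le_sum fun i _ => by nlinarith [hS2 i, hC1 i]
    calc ((∑ i, C i) - (m:ℝ)) ^ 2 = (∑ i, (C i - 1)) ^ 2 := by rw [h1]
      _ ≤ (m:ℝ) * ∑ i, (C i - 1) ^ 2 := h2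
      _ ≤ (m:ℝ) * ∑ i, S i ^ 2 :=
          mul_le_mul_of_nonneg_left h3 (Nat.cast_nonneg m)
  have hLHS : (1 / lam ^ 2) * (∑ a, ∑ c', G a c' ^ 2)
      = ∑ i, ∑ j, (S i * S j) * (u i ⬝ᵥ u j) ^ 2 := by
    rw [key]
    field_simp
  rw [hLHS]
  rcases Nat.eq_zero_or_pos m with hm | hm
  · subst hm
    simp
  · have hmpos : (0:ℝ) < m := by exact_mod_cast hm
    have : (0.9 / m) * ((∑ i, C i) - m) ^ 2 ≤ 0.9 * ∑ i, S i ^ 2 := by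
      rw [div_mul_eq_mul_div, div_le_iff₀ hmpos]
      nlinarith [hcosh]
    linarith
end
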